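/- arXiv:1911.02035 — 5 statements merged into one kernel-verified Lean document; each statement's English description precedes it below -/
import Mathlib

section
/- Let v ∈ {±1}^n have at most ℓ sign changes (i.e., at most ℓ indices i ∈ [n-1] with v_{i+1} ≠ v_i). Then the Haar wavelet transform Hv of v has at most ℓ·log₂(n) + 1 nonzero entries, where n = 2^m and H is the n×n orthonormal Haar wavelet basis matrix. -/
open Finset
open scoped Classical

/-- Entry of the orthonormal Haar wavelet matrix on `ℝ^(2^m)`.
Row `0` is the father wavelet; for `r ≥ 1`, writing `r = 2^i + j` with `0 ≤ j < 2^i`,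
row `r` is the wavelet `ψ_{i,j}` (row `1` is the mother wavelet). -/
noncomputable def haarEntry (m r x : ℕ) : ℝ :=
  if r = 0 then (2 : ℝ) ^ (-(m : ℝ) / 2)
  else
    let i := Nat.log 2 r
    let j := r - 2 ^ i
    if 2 ^ (m - i) * j ≤ x ∧ x < 2 ^ (m - i) * j + 2 ^ (m - i - 1) then
      (2 : ℝ) ^ (-((m : ℝ) - (i : ℝ)) / 2)
    else if 2 ^ (m - i) * j + 2 ^ (m - i - 1) ≤ x ∧ x < 2 ^ (m - i) * (j + 1) then
      -((2 : ℝ) ^ (-((m : ℝ) - (i : ℝ)) / 2))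
    else 0

/-- The number of sign changes of `v` on `{0, ..., n-1}`. -/
noncomputable def signChanges (n : ℕ) (v : ℕ → ℝ) : ℕ :=
  ((Finset.range (n - 1)).filter (fun i => v (i + 1) ≠ v i)).card

/-!
Every wavelet `ψ_{i,j}` other than the father wavelet is supported on a dyadic block on which it
has mean zero, so `⟨ψ_{i,j}, v⟩ ≠ 0` forces a sign change of `v` inside that block. The row is
recovered from the level `i` and any point `x` of its block as `2^i + ⌊x / 2^(m-i)⌋`, so each sign
change accounts for at most one nonzero coefficient on each of the `m` levels.
-/

def haarSupport (m r : ℕ) : Finset ℕ :=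
  Ico (2 ^ (m - Nat.log 2 r) * (r - 2 ^ Nat.log 2 r))
    (2 ^ (m - Nat.log 2 r) * (r - 2 ^ Nat.log 2 r + 1))

variable {m r : ℕ}

lemma haarEntry_eq_zero_of_notMem_haarSupport (hr : r ≠ 0) {x : ℕ} (hx : x ∉ haarSupport m r) :
    haarEntry m r x = 0 := by
  rw [haarSupport, mem_Ico, mul_add_one] at hx
  have hhalf : 2 ^ (m - Nat.log 2 r - 1) ≤ 2 ^ (m - Nat.log 2 r) :=
    Nat.pow_le_pow_right two_pos (Nat.sub_le _ _)
  simp only [haarEntry, if_neg hr, mul_add_one]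
  rw [if_neg fun h => hx ⟨h.1, h.2.trans_le (by gcongr)⟩,
    if_neg fun h => hx ⟨(Nat.le_add_right _ _).trans h.1, h.2⟩]

lemma sum_haarEntry_haarSupport (hr : r ≠ 0) (hrm : Nat.log 2 r < m) :
    ∑ x ∈ haarSupport m r, haarEntry m r x = 0 := by
  rw [haarSupport]
  set i := Nat.log 2 r with hi
  set a := 2 ^ (m - i) * (r - 2 ^ i)
  set L := 2 ^ (m - i - 1)
  have hW : 2 ^ (m - i) = L + L := by
    rw [← two_mul, ← pow_succ']; congr 1; omega
  have hend : 2 ^ (m - i) * (r - 2 ^ i + 1) = a + L + L := by rw [mul_add_one]; omega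
  rw [hend, ← sum_Ico_consecutive _ (Nat.le_add_right a L) (Nat.le_add_right _ L)]
  have hpos : ∀ x ∈ Ico a (a + L), haarEntry m r x = 2 ^ (-((m : ℝ) - i) / 2) := by
    intro x hx
    rw [mem_Ico] at hx
    simp only [haarEntry, if_neg hr, ← hi]
    rw [if_pos hx]
  have hneg : ∀ x ∈ Ico (a + L) (a + L + L), haarEntry m r x = -2 ^ (-((m : ℝ) - i) / 2) := by
    intro x hx
    rw [mem_Ico] at hx
    simp only [haarEntry, if_neg hr, ← hi]
    rw [if_neg (by omega), if_pos ⟨hx.1, by omega⟩]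
  rw [sum_congr rfl hpos, sum_congr rfl hneg]
  simp

lemma haarSupport_subset_range (hr : r ≠ 0) (hrm : r < 2 ^ m) :
    haarSupport m r ⊆ range (2 ^ m) := by
  have hlog : Nat.log 2 r < m := Nat.log_lt_of_lt_pow hr hrm
  have hshift : r - 2 ^ Nat.log 2 r + 1 ≤ 2 ^ Nat.log 2 r := by
    have := Nat.lt_pow_succ_log_self one_lt_two r
    rw [pow_succ] at this
    omega
  have hend : 2 ^ (m - Nat.log 2 r) * (r - 2 ^ Nat.log 2 r + 1) ≤ 2 ^ m :=
    calc 2 ^ (m - Nat.log 2 r) * (r - 2 ^ Nat.log 2 r + 1)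
        ≤ 2 ^ (m - Nat.log 2 r) * 2 ^ Nat.log 2 r := Nat.mul_le_mul_left _ hshift
      _ = 2 ^ m := by rw [← pow_add, Nat.sub_add_cancel hlog.le]
  intro x hx
  rw [haarSupport, mem_Ico] at hx
  exact mem_range.mpr (by omega)

lemma sum_haarEntry_mul_eq_zero_of_eqOn_haarSupport (hr : r ≠ 0) (hrm : r < 2 ^ m)
    {v : ℕ → ℝ} {c : ℝ} (hv : ∀ x ∈ haarSupport m r, v x = c) :
    ∑ x ∈ range (2 ^ m), haarEntry m r x * v x = 0 := by
  rw [← sum_subset (haarSupport_subset_range hr hrm) fun x _ hx => by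
    rw [haarEntry_eq_zero_of_notMem_haarSupport hr hx, zero_mul]]
  rw [sum_congr rfl fun x hx => by rw [hv x hx], ← sum_mul,
    sum_haarEntry_haarSupport hr (Nat.log_lt_of_lt_pow hr hrm), zero_mul]

lemma eq_of_mem_Ico_of_forall_succ_eq {α : Type*} {f : ℕ → α} {a b : ℕ}
    (hf : ∀ x, a ≤ x → x + 1 < b → f (x + 1) = f x) {x : ℕ} (hx : x ∈ Ico a b) : f x = f a := by
  obtain ⟨hax, hxb⟩ := mem_Ico.mp hx
  clear hx
  induction x, hax using Nat.le_induction with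
  | base => rfl
  | succ y hay ih => rw [hf y hay hxb, ih (by omega)]

lemma exists_signChange_mem_haarSupport (hr : r ≠ 0) (hrm : r < 2 ^ m) {v : ℕ → ℝ}
    (hv : ∑ x ∈ range (2 ^ m), haarEntry m r x * v x ≠ 0) :
    ∃ x ∈ (range (2 ^ m - 1)).filter (fun x => v (x + 1) ≠ v x), x ∈ haarSupport m r := by
  by_contra! hconst
  refine hv (sum_haarEntry_mul_eq_zero_of_eqOn_haarSupport hr hrm fun x hx =>
    eq_of_mem_Ico_of_forall_succ_eq (fun y hay hyb => ?_) hx)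
  have hy : y ∈ haarSupport m r := mem_Ico.mpr ⟨hay, by omega⟩
  have hy' : y + 1 < 2 ^ m :=
    mem_range.mp (haarSupport_subset_range hr hrm (mem_Ico.mpr ⟨by omega, hyb⟩))
  by_contra hne
  exact hconst y (mem_filter.mpr ⟨mem_range.mpr (by omega), hne⟩) hy

lemma pow_log_add_div_eq_of_mem_haarSupport (hr : r ≠ 0) {x : ℕ} (hx : x ∈ haarSupport m r) :
    2 ^ Nat.log 2 r + x / 2 ^ (m - Nat.log 2 r) = r := by
  rw [haarSupport, mem_Ico] at hx
  rw [Nat.div_eq_of_lt_le (by rw [mul_comm]; exact hx.1) (by rw [mul_comm]; exact hx.2)]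
  have := Nat.pow_log_le_self 2 hr
  omega

lemma filter_haar_ne_zero_subset (m : ℕ) (v : ℕ → ℝ) :
    (range (2 ^ m)).filter (fun r => ∑ x ∈ range (2 ^ m), haarEntry m r x * v x ≠ 0) ⊆
      insert 0 ((range m ×ˢ (range (2 ^ m - 1)).filter (fun x => v (x + 1) ≠ v x)).image
        fun p => 2 ^ p.1 + p.2 / 2 ^ (m - p.1)) := by
  intro r hr
  obtain ⟨hrm, hsum⟩ := mem_filter.mp hr
  rw [mem_range] at hrm
  rcases eq_or_ne r 0 with rfl | hr0
  · exact mem_insert_self _ _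
  obtain ⟨x, hx, hxr⟩ := exists_signChange_mem_haarSupport hr0 hrm hsum
  refine mem_insert_of_mem (mem_image.mpr ⟨(Nat.log 2 r, x), ?_, ?_⟩)
  · exact mem_product.mpr ⟨mem_range.mpr (Nat.log_lt_of_lt_pow hr0 hrm), hx⟩
  · exact pow_log_add_div_eq_of_mem_haarSupport hr0 hxr

theorem haar_transform_sparsity_general (m ℓ : ℕ) (v : ℕ → ℝ)
    (hsc : signChanges (2 ^ m) v ≤ ℓ) :
    ((Finset.range (2 ^ m)).filter
        (fun r => (∑ x ∈ Finset.range (2 ^ m), haarEntry m r x * v x) ≠ 0)).card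
      ≤ ℓ * m + 1 := by
  calc _ ≤ _ := card_le_card (filter_haar_ne_zero_subset m v)
    _ ≤ _ := card_insert_le _ _
    _ ≤ m * signChanges (2 ^ m) v + 1 := by
      grw [card_image_le, card_product, card_range]
      rfl
    _ ≤ ℓ * m + 1 := by rw [mul_comm ℓ]; gcongr

/-- If `v ∈ {±1}^n` has at most `ℓ` sign changes, where `n = 2^m`, then the Haar transform
`Hv` has at most `ℓ·log₂ n + 1 = ℓ·m + 1` nonzero entries. -/
theorem haar_transform_sparsity (m ℓ : ℕ) (v : ℕ → ℝ)
    (hv : ∀ i < 2 ^ m, v i = 1 ∨ v i = -1)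
    (hsc : signChanges (2 ^ m) v ≤ ℓ) :
    ((Finset.range (2 ^ m)).filter
        (fun r => (∑ x ∈ Finset.range (2 ^ m), haarEntry m r x * v x) ≠ 0)).card
      ≤ ℓ * m + 1 :=
  haar_transform_sparsity_general m ℓ v hsc
end

section
/- Let v ∈ {±1}^n have at most ℓ sign changes, with n = 2^m. Then Σ_{i∈T} Σ_{j=0}^{2^i-1} 2^{-(m-i)/2}·|⟨ψ_{i,j}, v⟩| ≤ ℓ·log₂(n) + 1, where T indexes all levels of the Haar basis (including father and mother wavelets at level 0). -/
open Finset
open scoped Classical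

/-- The weight `2^{-(m-i)/2}` associated to the row `r` of the Haar matrix, where `i` is the
level of the wavelet in row `r` (the father wavelet, row `0`, has level `0`). -/
noncomputable def haarWeight (m r : ℕ) : ℝ :=
  if r = 0 then (2 : ℝ) ^ (-(m : ℝ) / 2)
  else (2 : ℝ) ^ (-((m : ℝ) - (Nat.log 2 r : ℝ)) / 2)

/-! Since `|v| ≤ 1`, every term is at most `2^{-(m-i)/2} · 2^{-(m-i)/2} · 2^(m-i) = 1`, the
father wavelet included. A wavelet `ψ_{i,j}` of level `i < m` is orthogonal to `v` unless `v`
changes sign inside its support, and the supports of one level are disjoint blocks of length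
`2^(m-i)`; so a sign change at `y` can only be seen by the wavelet `j = y / 2^(m-i)` of each level,
each of the `m` levels contributes at most `ℓ`, and the total is at most `ℓ m + 1`. -/

noncomputable def haarCoeff (m r : ℕ) (v : ℕ → ℝ) : ℝ :=
  ∑ x ∈ range (2 ^ m), haarEntry m r x * v x

noncomputable def signChangeIndices (n : ℕ) (v : ℕ → ℝ) : Finset ℕ :=
  (range (n - 1)).filter (fun i => v (i + 1) ≠ v i)

lemma card_signChangeIndices (n : ℕ) (v : ℕ → ℝ) :
    #(signChangeIndices n v) = signChanges n v :=
  rfl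

lemma sum_range_two_pow_eq_add_sum_levels {M : Type*} [AddCommMonoid M] (f : ℕ → M) (m : ℕ) :
    ∑ r ∈ range (2 ^ m), f r = f 0 + ∑ i ∈ range m, ∑ j ∈ range (2 ^ i), f (2 ^ i + j) := by
  induction m with
  | zero => simp
  | succ m ih => rw [pow_succ, mul_two, sum_range_add, ih, sum_range_succ, add_assoc]

lemma two_rpow_neg_half_mul_self (k : ℕ) :
    (2 : ℝ) ^ (-(k : ℝ) / 2) * (2 : ℝ) ^ (-(k : ℝ) / 2) = ((2 : ℝ) ^ k)⁻¹ := by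
  rw [← Real.rpow_add two_pos, ← add_div, ← two_mul, mul_div_cancel_left₀ _ two_ne_zero,
    Real.rpow_neg zero_le_two, Real.rpow_natCast]

lemma abs_sum_le_card_of_abs_le_one {ι : Type*} {s : Finset ι} {v : ι → ℝ}
    (hv : ∀ x ∈ s, |v x| ≤ 1) :
    |∑ x ∈ s, v x| ≤ #s :=
  calc |∑ x ∈ s, v x| ≤ ∑ x ∈ s, |v x| := abs_sum_le_sum_abs _ _
    _ ≤ #s • (1 : ℝ) := sum_le_card_nsmul _ _ _ hv
    _ = #s := nsmul_one _

lemma eq_of_forall_succ_eq {α : Type*} {v : ℕ → α} {a b : ℕ}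
    (h : ∀ y, a ≤ y → y + 1 < b → v (y + 1) = v y) : ∀ x ∈ Ico a b, v x = v a := by
  intro x hx
  rw [mem_Ico] at hx
  induction x, hx.1 using Nat.le_induction with
  | base => rfl
  | succ y hay ih => rw [h y hay hx.2, ih ⟨hay, by omega⟩]

section Step

variable {v : ℕ → ℝ} {a h : ℕ}

lemma sum_range_step_mul {N : ℕ} (hN : a + 2 * h ≤ N) (c : ℝ) :
    ∑ x ∈ range N,
        (if a ≤ x ∧ x < a + h then c else if a + h ≤ x ∧ x < a + 2 * h then -c else 0) * v x
      = c * (∑ x ∈ Ico a (a + h), v x - ∑ x ∈ Ico (a + h) (a + 2 * h), v x) := by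
  have hsub : Ico a (a + 2 * h) ⊆ range N := fun x hx => by
    simp only [mem_Ico, mem_range] at hx ⊢; omega
  rw [← sum_subset hsub fun x _ hx => by
      rw [mem_Ico] at hx; rw [if_neg (by omega), if_neg (by omega), zero_mul],
    ← sum_Ico_consecutive _ (by omega : a ≤ a + h) (by omega : a + h ≤ a + 2 * h),
    mul_sub, mul_sum, mul_sum, sub_eq_add_neg, ← sum_neg_distrib]
  congr 1 <;> refine sum_congr rfl fun x hx => ?_ <;> simp only [mem_Ico] at hx
  · rw [if_pos hx]
  · rw [if_neg (by omega), if_pos hx, neg_mul]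

lemma abs_sum_Ico_sub_sum_Ico_le (hv : ∀ x ∈ Ico a (a + 2 * h), |v x| ≤ 1) :
    |∑ x ∈ Ico a (a + h), v x - ∑ x ∈ Ico (a + h) (a + 2 * h), v x| ≤ 2 * h := by
  have h₁ := abs_sum_le_card_of_abs_le_one fun x hx =>
    hv x (Ico_subset_Ico_right (by omega : a + h ≤ a + 2 * h) hx)
  have h₂ := abs_sum_le_card_of_abs_le_one fun x hx =>
    hv x (Ico_subset_Ico_left (by omega : a ≤ a + h) hx)
  rw [Nat.card_Ico, add_tsub_cancel_left] at h₁
  rw [Nat.card_Ico, show a + 2 * h - (a + h) = h by omega] at h₂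
  linarith [abs_sub (∑ x ∈ Ico a (a + h), v x) (∑ x ∈ Ico (a + h) (a + 2 * h), v x)]

lemma sum_Ico_sub_sum_Ico_eq_zero (hv : ∀ x ∈ Ico a (a + 2 * h), v x = v a) :
    ∑ x ∈ Ico a (a + h), v x - ∑ x ∈ Ico (a + h) (a + 2 * h), v x = 0 := by
  rw [sum_congr rfl fun x hx => hv x (Ico_subset_Ico_right (by omega : a + h ≤ a + 2 * h) hx),
    sum_congr rfl fun x hx => hv x (Ico_subset_Ico_left (by omega : a ≤ a + h) hx),
    sum_const, sum_const, Nat.card_Ico, Nat.card_Ico, show a + 2 * h - (a + h) = h by omega,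
    add_tsub_cancel_left, sub_self]

end Step

lemma two_rpow_neg_half_mul_abs_mul_le_one (k : ℕ) {D : ℝ} (hD : |D| ≤ 2 ^ k) :
    (2 : ℝ) ^ (-(k : ℝ) / 2) * |(2 : ℝ) ^ (-(k : ℝ) / 2) * D| ≤ 1 := by
  rw [abs_mul, abs_of_pos (by positivity), ← mul_assoc, two_rpow_neg_half_mul_self]
  exact inv_mul_le_one_of_le₀ hD (by positivity)

lemma log_two_pow_add {i j : ℕ} (hj : j < 2 ^ i) : Nat.log 2 (2 ^ i + j) = i :=
  (Nat.log_eq_iff (Or.inr ⟨one_lt_two, by positivity⟩)).2 ⟨by omega, by rw [pow_succ]; omega⟩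

section Level

variable {m i j : ℕ}

lemma two_pow_sub_eq_two_mul (hi : i < m) : 2 ^ (m - i) = 2 * 2 ^ (m - i - 1) := by
  rw [← pow_succ', Nat.sub_one_add_one (by omega)]

lemma two_pow_sub_mul_add_le (hi : i < m) (hj : j < 2 ^ i) :
    2 ^ (m - i) * j + 2 * 2 ^ (m - i - 1) ≤ 2 ^ m :=
  calc 2 ^ (m - i) * j + 2 * 2 ^ (m - i - 1) = 2 ^ (m - i) * (j + 1) := by
        rw [← two_pow_sub_eq_two_mul hi, mul_add_one]
    _ ≤ 2 ^ (m - i) * 2 ^ i := Nat.mul_le_mul_left _ hj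
    _ = 2 ^ m := by rw [← pow_add, Nat.sub_add_cancel hi.le]

lemma haarWeight_two_pow_add (hi : i < m) (hj : j < 2 ^ i) :
    haarWeight m (2 ^ i + j) = (2 : ℝ) ^ (-((m - i : ℕ) : ℝ) / 2) := by
  rw [haarWeight, if_neg (by positivity), log_two_pow_add hj, Nat.cast_sub hi.le]

lemma haarCoeff_two_pow_add (hi : i < m) (hj : j < 2 ^ i) (v : ℕ → ℝ) :
    haarCoeff m (2 ^ i + j) v = (2 : ℝ) ^ (-((m - i : ℕ) : ℝ) / 2) *
      (∑ x ∈ Ico (2 ^ (m - i) * j) (2 ^ (m - i) * j + 2 ^ (m - i - 1)), v x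
        - ∑ x ∈ Ico (2 ^ (m - i) * j + 2 ^ (m - i - 1)) (2 ^ (m - i) * j + 2 * 2 ^ (m - i - 1)),
            v x) := by
  rw [haarCoeff, ← sum_range_step_mul (two_pow_sub_mul_add_le hi hj)]
  refine sum_congr rfl fun x _ => ?_
  rw [haarEntry, if_neg (by positivity)]
  simp only [log_two_pow_add hj, add_tsub_cancel_left, mul_add_one, ← two_pow_sub_eq_two_mul hi,
    Nat.cast_sub hi.le]

end Level

section Bounds

variable {m : ℕ} {v : ℕ → ℝ}

lemma haarWeight_zero_mul_abs_haarCoeff_le_one (hv : ∀ x < 2 ^ m, |v x| ≤ 1) :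
    haarWeight m 0 * |haarCoeff m 0 v| ≤ 1 := by
  have hsum : haarCoeff m 0 v = (2 : ℝ) ^ (-(m : ℝ) / 2) * ∑ x ∈ range (2 ^ m), v x := by
    simp only [haarCoeff, haarEntry, if_true, mul_sum]
  rw [haarWeight, if_pos rfl, hsum]
  refine two_rpow_neg_half_mul_abs_mul_le_one m ?_
  simpa using abs_sum_le_card_of_abs_le_one fun x hx => hv x (mem_range.1 hx)

lemma haarWeight_two_pow_add_mul_abs_haarCoeff_le_one (hv : ∀ x < 2 ^ m, |v x| ≤ 1)
    {i j : ℕ} (hi : i < m) (hj : j < 2 ^ i) :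
    haarWeight m (2 ^ i + j) * |haarCoeff m (2 ^ i + j) v| ≤ 1 := by
  rw [haarWeight_two_pow_add hi hj, haarCoeff_two_pow_add hi hj]
  refine two_rpow_neg_half_mul_abs_mul_le_one _ ?_
  have hsupp := two_pow_sub_mul_add_le hi hj
  refine (abs_sum_Ico_sub_sum_Ico_le fun x hx => hv x ?_).trans_eq ?_
  · rw [mem_Ico] at hx; omega
  · exact_mod_cast (two_pow_sub_eq_two_mul hi).symm

lemma exists_signChange_of_haarCoeff_ne_zero {i j : ℕ} (hi : i < m) (hj : j < 2 ^ i)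
    (hne : haarCoeff m (2 ^ i + j) v ≠ 0) :
    ∃ y ∈ signChangeIndices (2 ^ m) v, y / 2 ^ (m - i) = j := by
  by_contra! hno
  refine hne ?_
  rw [haarCoeff_two_pow_add hi hj, sum_Ico_sub_sum_Ico_eq_zero, mul_zero]
  refine eq_of_forall_succ_eq fun y hy₁ hy₂ => ?_
  have hsupp := two_pow_sub_mul_add_le hi hj
  have hblock : (j + 1) * 2 ^ (m - i) = 2 ^ (m - i) * j + 2 * 2 ^ (m - i - 1) := by
    rw [two_pow_sub_eq_two_mul hi]; ring
  have hdiv : y / 2 ^ (m - i) = j := Nat.div_eq_of_lt_le (by rw [mul_comm]; exact hy₁) (by omega)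
  by_contra hchange
  exact hno y (mem_filter.2 ⟨mem_range.2 (by omega), hchange⟩) hdiv

lemma sum_level_le_signChanges (hv : ∀ x < 2 ^ m, |v x| ≤ 1) {i : ℕ} (hi : i < m) :
    ∑ j ∈ range (2 ^ i), haarWeight m (2 ^ i + j) * |haarCoeff m (2 ^ i + j) v|
      ≤ signChanges (2 ^ m) v := by
  set J := (range (2 ^ i)).filter fun j =>
    haarWeight m (2 ^ i + j) * |haarCoeff m (2 ^ i + j) v| ≠ 0
  have hJ : J ⊆ (signChangeIndices (2 ^ m) v).image (· / 2 ^ (m - i)) := fun j hj => by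
    rw [mem_filter, mem_range] at hj
    obtain ⟨y, hy, hyj⟩ :=
      exists_signChange_of_haarCoeff_ne_zero hi hj.1 fun h => hj.2 (by rw [h, abs_zero, mul_zero])
    exact mem_image.2 ⟨y, hy, hyj⟩
  rw [← sum_filter_ne_zero, ← card_signChangeIndices]
  calc ∑ j ∈ J, haarWeight m (2 ^ i + j) * |haarCoeff m (2 ^ i + j) v| ≤ #J • (1 : ℝ) :=
        sum_le_card_nsmul _ _ _ fun j hj =>
          haarWeight_two_pow_add_mul_abs_haarCoeff_le_one hv hi (mem_range.1 (mem_filter.1 hj).1)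
    _ ≤ #(signChangeIndices (2 ^ m) v) := by
        rw [nsmul_one]; exact_mod_cast (card_le_card hJ).trans card_image_le

end Bounds

/-- If `v ∈ {±1}^n` has at most `ℓ` sign changes, `n = 2^m`, then
`∑_{i,j} 2^{-(m-i)/2} |⟨ψ_{i,j}, v⟩| ≤ ℓ·log₂ n + 1 = ℓ·m + 1`, the sum ranging over all
wavelets of the Haar basis (including the father and mother wavelets at level 0). -/
theorem haar_weighted_l1_bound (m ℓ : ℕ) (v : ℕ → ℝ)
    (hv : ∀ i < 2 ^ m, v i = 1 ∨ v i = -1)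
    (hsc : signChanges (2 ^ m) v ≤ ℓ) :
    ∑ r ∈ Finset.range (2 ^ m),
        haarWeight m r * |∑ x ∈ Finset.range (2 ^ m), haarEntry m r x * v x|
      ≤ ℓ * m + 1 := by
  have habs : ∀ x < 2 ^ m, |v x| ≤ 1 := fun x hx => by rcases hv x hx with h | h <;> simp [h]
  have hlevel : ∀ i ∈ range m,
      ∑ j ∈ range (2 ^ i), haarWeight m (2 ^ i + j) * |haarCoeff m (2 ^ i + j) v| ≤ ℓ :=
    fun i hi => (sum_level_le_signChanges habs (mem_range.1 hi)).trans (by exact_mod_cast hsc)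
  calc ∑ r ∈ range (2 ^ m), haarWeight m r * |haarCoeff m r v|
      = haarWeight m 0 * |haarCoeff m 0 v| + ∑ i ∈ range m,
          ∑ j ∈ range (2 ^ i), haarWeight m (2 ^ i + j) * |haarCoeff m (2 ^ i + j) v| :=
        sum_range_two_pow_eq_add_sum_levels _ m
    _ ≤ 1 + m • (ℓ : ℝ) := by
        gcongr
        · exact haarWeight_zero_mul_abs_haarCoeff_le_one habs
        · simpa using sum_le_card_nsmul _ _ _ hlevel
    _ = ℓ * m + 1 := by rw [nsmul_eq_mul]; ring
end

section
/- Shelling trick: If v ∈ ℝ^m satisfies ‖v‖₂ ≤ C and ‖v‖₁ ≤ C·√k, then there exist vectors v₁,...,v_{m/k} ∈ ℝ^m, each k-sparse, with pairwise disjoint supports, such that v = Σᵢ vᵢ and Σᵢ ‖vᵢ‖₂ ≤ 2C. -/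
open Finset
open scoped Classical

/-- Shelling trick: if `v ∈ ℝ^M` has `‖v‖₂ ≤ C` and `‖v‖₁ ≤ C√k` (with `k ∣ M`), then `v`
decomposes as a sum of `M/k` vectors, each `k`-sparse, with pairwise disjoint supports,
whose Euclidean norms sum to at most `2C`. -/
theorem shelling (M k : ℕ) (hk : 0 < k) (hdvd : k ∣ M) (C : ℝ) (v : Fin M → ℝ)
    (h2 : Real.sqrt (∑ j, (v j) ^ 2) ≤ C)
    (h1 : ∑ j, |v j| ≤ C * Real.sqrt k) :
    ∃ w : Fin (M / k) → Fin M → ℝ,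
      (∀ i, ((Finset.univ.filter (fun j => w i j ≠ 0)).card ≤ k)) ∧
      (∀ i i', i ≠ i' → ∀ j, w i j = 0 ∨ w i' j = 0) ∧
      (∀ j, v j = ∑ i, w i j) ∧
      (∑ i, Real.sqrt (∑ j, (w i j) ^ 2)) ≤ 2 * C := by
  have hC : 0 ≤ C := le_trans (Real.sqrt_nonneg _) h2
  rcases Nat.eq_zero_or_pos M with hM0 | hM
  · refine ⟨fun _ _ => 0, ?_, ?_, ?_, ?_⟩
    · intro i; simp
    · intro i i' _ j; left; rfl
    · intro j; exact absurd j.2 (by omega)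
    · simp; linarith
  -- main case
  have hn0 : 0 < M / k := Nat.div_pos (Nat.le_of_dvd hM hdvd) hk
  have hMk : M / k * k = M := Nat.div_mul_cancel hdvd
  set σ := Tuple.sort (fun j : Fin M => -|v j|) with hσ
  have hmono : Monotone ((fun j : Fin M => -|v j|) ∘ σ) := Tuple.monotone_sort _
  set u : Fin M → ℝ := fun t => |v (σ t)| with hu
  have hanti : ∀ s t : Fin M, s ≤ t → u t ≤ u s := by
    intro s t hst
    have := hmono hst
    simp only [Function.comp_apply, neg_le_neg_iff] at this
    exact this
  have hupos : ∀ t, 0 ≤ u t := fun t => abs_nonneg _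
  have hdivlt : ∀ t : Fin M, (t : ℕ) / k < M / k := fun t =>
    Nat.div_lt_div_of_lt_of_dvd hdvd t.2
  set q' : Fin M → Fin (M / k) := fun t => ⟨(t : ℕ) / k, hdivlt t⟩ with hq'
  set q : Fin M → Fin (M / k) := fun j => q' (σ.symm j) with hq
  set w : Fin (M / k) → Fin M → ℝ := fun i j => if q j = i then v j else 0 with hw
  set A : Fin (M / k) → Finset (Fin M) := fun i => univ.filter (fun t => q' t = i) with hA
  -- block cardinality
  have hcardA : ∀ i, (A i).card = k := by
    intro i
    have hik : (i : ℕ) * k + k ≤ M := by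
      have : (i : ℕ) + 1 ≤ M / k := i.2
      calc (i : ℕ) * k + k = ((i : ℕ) + 1) * k := by ring
        _ ≤ M / k * k := Nat.mul_le_mul_right k this
        _ = M := hMk
    have : (A i).card = (Finset.range k).card := by
      refine Finset.card_bij' (fun t _ => (t : ℕ) % k)
        (fun r hr => (⟨(i : ℕ) * k + r, by
          have : r < k := Finset.mem_range.mp hr
          omega⟩ : Fin M)) ?_ ?_ ?_ ?_
      · intro t ht
        exact Finset.mem_range.mpr (Nat.mod_lt _ hk)
      · intro r hr
        have hrk : r < k := Finset.mem_range.mp hr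
        simp only [hA, Finset.mem_filter, Finset.mem_univ, true_and, hq']
        apply Fin.ext
        show ((i : ℕ) * k + r) / k = (i : ℕ)
        rw [Nat.add_comm, Nat.add_mul_div_right _ _ hk, Nat.div_eq_of_lt hrk]
        omega
      · intro t ht
        simp only [hA, Finset.mem_filter, Finset.mem_univ, true_and, hq'] at ht
        have hq : (t : ℕ) / k = (i : ℕ) := congrArg Fin.val ht
        apply Fin.ext
        show (i : ℕ) * k + (t : ℕ) % k = (t : ℕ)
        have h2' := Nat.div_add_mod (t : ℕ) k
        rw [hq, Nat.mul_comm] at h2'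
        exact h2'
      · intro r hr
        have hrk : r < k := Finset.mem_range.mp hr
        show ((i : ℕ) * k + r) % k = r
        rw [Nat.add_comm, Nat.add_mul_mod_self_right, Nat.mod_eq_of_lt hrk]
    rw [this, Finset.card_range]
  -- support of w i has the same card as A i
  have hsupp : ∀ i, (univ.filter (fun j => w i j ≠ 0)) ⊆ (univ.filter (fun j => q j = i)) := by
    intro i j hj
    simp only [Finset.mem_filter, Finset.mem_univ, true_and, hw] at hj ⊢
    by_contra hne
    exact hj (if_neg hne)
  have hcardq : ∀ i, (univ.filter (fun j : Fin M => q j = i)).card = (A i).card := by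
    intro i
    apply Finset.card_equiv σ.symm
    intro j
    simp only [Finset.mem_filter, Finset.mem_univ, true_and, hA, hq]
  -- w i (σ t) in terms of u
  have hwσ : ∀ i t, w i (σ t) = if q' t = i then v (σ t) else 0 := by
    intro i t
    simp only [hw, hq, Equiv.symm_apply_apply]
  -- sums of squares per block
  have hT : ∀ i, ∑ j, (w i j) ^ 2 = ∑ t ∈ A i, (u t) ^ 2 := by
    intro i
    rw [← Equiv.sum_comp σ (fun j => (w i j) ^ 2)]
    rw [Finset.sum_filter]
    apply Finset.sum_congr rfl
    intro t _
    rw [hwσ]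
    by_cases h : q' t = i <;> simp [h, hu, sq_abs]
  set g : Fin (M / k) → ℝ := fun i => ∑ t ∈ A i, u t with hg
  have hgpos : ∀ i, 0 ≤ g i := fun i => Finset.sum_nonneg fun t _ => hupos t
  have hgsum : ∑ i, g i = ∑ j, |v j| := by
    rw [hg]
    rw [show (fun i => ∑ t ∈ A i, u t) = fun i => ∑ t ∈ univ.filter (fun t => q' t = i), u t
      from rfl]
    rw [Finset.sum_fiberwise univ q' u]
    exact Equiv.sum_comp σ (fun j => |v j|)
  have husq : ∑ t, (u t) ^ 2 = ∑ j, (v j) ^ 2 := by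
    have := Equiv.sum_comp σ (fun j => (v j) ^ 2)
    rw [← this]
    exact Finset.sum_congr rfl fun t _ => by rw [hu, sq_abs]
  have hkpos : (0 : ℝ) < Real.sqrt k := Real.sqrt_pos.mpr (by exact_mod_cast hk)
  set i0 : Fin (M / k) := ⟨0, hn0⟩ with hi0
  set p : Fin (M / k) → Fin (M / k) :=
    fun i => ⟨(i : ℕ) - 1, lt_of_le_of_lt (Nat.sub_le _ _) i.2⟩ with hp
  have hT0 : Real.sqrt (∑ j, (w i0 j) ^ 2) ≤ C := by
    rw [hT]
    refine le_trans (Real.sqrt_le_sqrt ?_) h2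
    rw [← husq]
    exact Finset.sum_le_sum_of_subset_of_nonneg (Finset.subset_univ _)
      (fun t _ _ => sq_nonneg _)
  have hstep : ∀ i : Fin (M / k), i ≠ i0 →
      Real.sqrt (∑ j, (w i j) ^ 2) ≤ g (p i) / Real.sqrt k := by
    intro i hi
    have hi1 : 1 ≤ (i : ℕ) := by
      rcases Nat.eq_zero_or_pos (i : ℕ) with h | h
      · exact absurd (Fin.ext h : i = i0) hi
      · exact h
    have hut : ∀ t ∈ A i, u t ≤ g (p i) / k := by
      intro t ht
      simp only [hA, Finset.mem_filter, Finset.mem_univ, true_and] at ht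
      have htv : (t : ℕ) / k = (i : ℕ) := congrArg Fin.val ht
      have hle : ∀ s ∈ A (p i), u t ≤ u s := by
        intro s hs
        simp only [hA, Finset.mem_filter, Finset.mem_univ, true_and] at hs
        have hsv : (s : ℕ) / k = (i : ℕ) - 1 := congrArg Fin.val hs
        have : (s : ℕ) < (t : ℕ) := by
          apply Nat.lt_of_div_lt_div (c := k)
          omega
        exact hanti s t (le_of_lt this)
      have hsum : ((A (p i)).card : ℝ) * u t ≤ g (p i) := by
        have := Finset.card_nsmul_le_sum (A (p i)) u (u t) (fun s hs => hle s hs)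
        rwa [nsmul_eq_mul] at this
      rw [hcardA (p i)] at hsum
      rw [le_div_iff₀ (by exact_mod_cast hk : (0:ℝ) < (k:ℝ)), mul_comm]
      exact hsum
    rw [hT]
    have hTle : ∑ t ∈ A i, u t ^ 2 ≤ (g (p i) / Real.sqrt k) ^ 2 := by
      calc ∑ t ∈ A i, u t ^ 2
          ≤ ∑ _t ∈ A i, (g (p i) / (k : ℝ)) ^ 2 :=
            Finset.sum_le_sum fun t ht => pow_le_pow_left₀ (hupos t) (hut t ht) 2
        _ = (k : ℝ) * (g (p i) / (k : ℝ)) ^ 2 := by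
            rw [Finset.sum_const, hcardA, nsmul_eq_mul]
        _ = (g (p i) / Real.sqrt k) ^ 2 := by
            rw [div_pow, div_pow, Real.sq_sqrt (by positivity)]
            have : ((k : ℝ)) ≠ 0 := by positivity
            field_simp
    calc Real.sqrt (∑ t ∈ A i, u t ^ 2)
        ≤ Real.sqrt ((g (p i) / Real.sqrt k) ^ 2) := Real.sqrt_le_sqrt hTle
      _ = g (p i) / Real.sqrt k := Real.sqrt_sq (div_nonneg (hgpos _) hkpos.le)
  refine ⟨w, ?_, ?_, ?_, ?_⟩
  · intro i
    calc (univ.filter (fun j => w i j ≠ 0)).card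
        ≤ (univ.filter (fun j : Fin M => q j = i)).card := Finset.card_le_card (hsupp i)
      _ = (A i).card := hcardq i
      _ = k := hcardA i
  · intro i i' hne j
    by_cases h : q j = i
    · right
      have : q j ≠ i' := fun h' => hne (h ▸ h' ▸ rfl)
      simp [hw, this]
    · left; simp [hw, h]
  · intro j
    have : ∑ i, w i j = ∑ i, if q j = i then v j else 0 := rfl
    rw [this, Finset.sum_ite_eq univ (q j) (fun _ => v j), if_pos (Finset.mem_univ _)]
  · have hsplit : ∑ i, Real.sqrt (∑ j, (w i j) ^ 2)
        = Real.sqrt (∑ j, (w i0 j) ^ 2)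
          + ∑ i ∈ univ.erase i0, Real.sqrt (∑ j, (w i j) ^ 2) :=
      (Finset.add_sum_erase univ _ (Finset.mem_univ i0)).symm
    have hpinj : ∀ x ∈ univ.erase i0, ∀ y ∈ univ.erase i0, p x = p y → x = y := by
      intro x hx y hy hxy
      have hx1 : (x : ℕ) ≠ 0 := fun h => (Finset.mem_erase.mp hx).1 (Fin.ext h)
      have hy1 : (y : ℕ) ≠ 0 := fun h => (Finset.mem_erase.mp hy).1 (Fin.ext h)
      have := congrArg Fin.val hxy
      simp only [hp] at this
      exact Fin.ext (by omega)
    have hsum2 : ∑ i ∈ univ.erase i0, g (p i) ≤ ∑ i, g i := by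
      rw [← Finset.sum_image hpinj]
      exact Finset.sum_le_sum_of_subset_of_nonneg (Finset.subset_univ _)
        (fun i _ _ => hgpos i)
    calc ∑ i, Real.sqrt (∑ j, (w i j) ^ 2)
        = Real.sqrt (∑ j, (w i0 j) ^ 2)
          + ∑ i ∈ univ.erase i0, Real.sqrt (∑ j, (w i j) ^ 2) := hsplit
      _ ≤ C + ∑ i ∈ univ.erase i0, g (p i) / Real.sqrt k := by
          refine add_le_add hT0 (Finset.sum_le_sum fun i hi => ?_)
          exact hstep i (Finset.mem_erase.mp hi).1
      _ = C + (∑ i ∈ univ.erase i0, g (p i)) / Real.sqrt k := by rw [Finset.sum_div]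
      _ ≤ C + (∑ i, g i) / Real.sqrt k := by gcongr
      _ = C + (∑ j, |v j|) / Real.sqrt k := by rw [hgsum]
      _ ≤ C + (C * Real.sqrt k) / Real.sqrt k := by gcongr
      _ = 2 * C := by field_simp; ring
end

section
/- For a normalized multinomial: let p ∈ Δ^n be a probability vector, X ∼ Mul_k(p) the normalized frequency vector of k i.i.d. draws from p, and v ∈ {±1}^n. Then for any even t ≤ k, E[⟨X - p, v⟩^t] ≤ (8t/k)^{t/2}. -/
/-!
Centering each draw gives `k · ⟨X - p, v⟩ = ∑ₐ (v (Wₐ) - ⟨p, v⟩)`, a sum of `k` independent,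
mean-zero variables with values in an interval of length `2`. By Hoeffding's lemma each summand
is sub-Gaussian with variance proxy `1`, so the sum `S` is sub-Gaussian with proxy `k`. Bounding
`|x|^t ≤ t! s⁻ᵗ (e^{sx} + e^{-sx})` with `s² = t / k` turns the bound on the moment generating
function into `E[S^t] ≤ 2 (e k t)^{t/2} ≤ (8 k t)^{t/2}`.
-/

open MeasureTheory ProbabilityTheory Finset Real
open scoped Nat NNReal

lemma exp_mul_abs_le_exp_add_exp_neg (s x : ℝ) :
    exp (s * |x|) ≤ exp (s * x) + exp (-(s * x)) := by
  rcases abs_cases x with ⟨hx, -⟩ | ⟨hx, -⟩ <;> rw [hx]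
  · linarith [exp_pos (-(s * x))]
  · rw [mul_neg]
    linarith [exp_pos (s * x)]

lemma abs_pow_le_factorial_div_pow_mul_exp (t : ℕ) {s : ℝ} (hs : 0 < s) (x : ℝ) :
    |x| ^ t ≤ t ! / s ^ t * (exp (s * x) + exp (-(s * x))) := by
  have h_taylor := pow_div_factorial_le_exp _ (mul_nonneg hs.le (abs_nonneg x)) t
  rw [mul_pow, div_le_iff₀ (by positivity)] at h_taylor
  rw [div_mul_eq_mul_div, le_div_iff₀ (by positivity)]
  nlinarith [exp_mul_abs_le_exp_add_exp_neg s x, pow_pos hs t, (t ! : ℕ).cast_nonneg (α := ℝ)]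

namespace ProbabilityTheory.HasSubgaussianMGF

variable {Ω : Type*} {mΩ : MeasurableSpace Ω} {μ : Measure Ω} {X : Ω → ℝ} {c : ℝ≥0}

lemma integral_abs_pow_le (h : HasSubgaussianMGF X c μ) (t : ℕ) {s : ℝ} (hs : 0 < s) :
    ∫ ω, |X ω| ^ t ∂μ ≤ t ! / s ^ t * (2 * exp (c * s ^ 2 / 2)) := by
  have h_int : Integrable (fun ω ↦ exp (s * X ω) + exp (-s * X ω)) μ :=
    (h.integrable_exp_mul s).add (h.integrable_exp_mul (-s))
  calc ∫ ω, |X ω| ^ t ∂μ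
      ≤ ∫ ω, t ! / s ^ t * (exp (s * X ω) + exp (-s * X ω)) ∂μ := by
        refine integral_mono_of_nonneg (ae_of_all _ fun ω ↦ by positivity) (h_int.const_mul _)
          (ae_of_all _ fun ω ↦ ?_)
        simpa only [neg_mul] using abs_pow_le_factorial_div_pow_mul_exp t hs (X ω)
    _ = t ! / s ^ t * (mgf X μ s + mgf X μ (-s)) := by
        rw [integral_const_mul, integral_add (h.integrable_exp_mul s) (h.integrable_exp_mul (-s))]
        rfl
    _ ≤ t ! / s ^ t * (2 * exp (c * s ^ 2 / 2)) := by
        gcongr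
        linarith [h.mgf_le s, neg_sq s ▸ h.mgf_le (-s)]

lemma integral_pow_two_mul_le (h : HasSubgaussianMGF X c μ) (hc : 0 < c) {m : ℕ} (hm : 0 < m) :
    ∫ ω, X ω ^ (2 * m) ∂μ ≤ 2 * (2 * exp 1 * c * m) ^ m := by
  set s := √(2 * m / c)
  have hs2 : s ^ 2 = 2 * m / c := sq_sqrt (by positivity)
  have hs : 0 < s := sqrt_pos.2 (by positivity)
  have h_fact : ((2 * m) ! : ℝ) ≤ (2 * m) ^ (2 * m) := by exact_mod_cast (2 * m).factorial_le_pow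
  have hc' : (c : ℝ) ≠ 0 := by positivity
  calc ∫ ω, X ω ^ (2 * m) ∂μ = ∫ ω, |X ω| ^ (2 * m) ∂μ := by simp_rw [(even_two_mul m).pow_abs]
    _ ≤ (2 * m) ! / s ^ (2 * m) * (2 * exp (c * s ^ 2 / 2)) := h.integral_abs_pow_le _ hs
    _ = (2 * m) ! / (2 * m / c) ^ m * (2 * exp 1 ^ m) := by
        rw [pow_mul, hs2, ← exp_nat_mul]
        field_simp
    _ ≤ (2 * m) ^ (2 * m) / (2 * m / c) ^ m * (2 * exp 1 ^ m) := by gcongr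
    _ = 2 * (2 * exp 1 * c * m) ^ m := by
        rw [pow_mul, ← div_pow]
        field_simp
        ring

end ProbabilityTheory.HasSubgaussianMGF

lemma sum_card_filter_mul_eq_sum {α β : Type*} [Fintype α] [Fintype β] [DecidableEq β]
    (w : α → β) (v : β → ℝ) : ∑ j, (#{a | w a = j} : ℝ) * v j = ∑ a, v (w a) := by
  rw [← Finset.sum_fiberwise univ w (fun a ↦ v (w a))]
  refine Finset.sum_congr rfl fun j _ ↦ ?_
  rw [Finset.sum_congr rfl fun a ha ↦ by rw [(Finset.mem_filter.1 ha).2], sum_const, nsmul_eq_mul]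

lemma sum_frequency_sub_mul_eq {α β : Type*} [Fintype α] [Nonempty α] [Fintype β]
    [DecidableEq β] (w : α → β) (p v : β → ℝ) :
    ∑ j, ((#{a | w a = j} : ℝ) / Fintype.card α - p j) * v j
      = (∑ a, (v (w a) - ∑ j, p j * v j)) / Fintype.card α := by
  have hcard : (Fintype.card α : ℝ) ≠ 0 := by positivity
  simp only [sub_mul, sum_sub_distrib, div_mul_eq_mul_div, ← sum_div, sum_card_filter_mul_eq_sum,
    sum_const, Finset.card_univ, nsmul_eq_mul]
  field_simp

section

variable {Ω : Type*} {mΩ : MeasurableSpace Ω} {μ : Measure Ω}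

lemma integral_comp_eq_sum_mul {β : Type*} [Fintype β] [MeasurableSpace β]
    [MeasurableSingletonClass β] [IsFiniteMeasure μ] {W : Ω → β} (hW : Measurable W)
    {p : β → ℝ} (hp0 : ∀ j, 0 ≤ p j) (hlaw : ∀ j, μ {ω | W ω = j} = ENNReal.ofReal (p j))
    (g : β → ℝ) :
    ∫ ω, g (W ω) ∂μ = ∑ j, p j * g j := by
  rw [← integral_map hW.aemeasurable (measurable_of_finite g).aestronglyMeasurable,
    integral_fintype .of_finite]
  refine Finset.sum_congr rfl fun j _ ↦ ?_
  rw [smul_eq_mul, measureReal_def, Measure.map_apply hW (measurableSet_singleton j)]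
  simp only [Set.preimage, Set.mem_singleton_iff, hlaw j, ENNReal.toReal_ofReal (hp0 j)]

lemma hasSubgaussianMGF_comp_sub_sum_mul [IsProbabilityMeasure μ] {β : Type*} [Fintype β]
    [MeasurableSpace β] [MeasurableSingletonClass β] {W : Ω → β} (hW : Measurable W)
    {p : β → ℝ} (hp0 : ∀ j, 0 ≤ p j) (hlaw : ∀ j, μ {ω | W ω = j} = ENNReal.ofReal (p j))
    {v : β → ℝ} (hv : ∀ j, |v j| ≤ 1) :
    HasSubgaussianMGF (fun ω ↦ v (W ω) - ∑ j, p j * v j) 1 μ := by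
  have h := hasSubgaussianMGF_of_mem_Icc ((measurable_of_finite v).comp hW).aemeasurable
    (ae_of_all μ fun ω ↦ abs_le.1 (hv (W ω)))
  simp only [Function.comp_apply, integral_comp_eq_sum_mul hW hp0 hlaw] at h
  convert h
  norm_num

end

theorem multinomial_moment_bound_general
    (Ω : Type*) [MeasurableSpace Ω] (μ : Measure Ω) [IsProbabilityMeasure μ]
    (n k t : ℕ) (hk : 0 < k) (ht : Even t) (ht0 : 0 < t)
    (p : Fin n → ℝ) (hp0 : ∀ j, 0 ≤ p j)
    (v : Fin n → ℝ) (hv : ∀ j, v j = 1 ∨ v j = -1)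
    (W : Fin k → Ω → Fin n)
    (hmeas : ∀ a, Measurable (W a))
    (hindep : iIndepFun W μ)
    (hlaw : ∀ a j, μ {ω | W a ω = j} = ENNReal.ofReal (p j)) :
    ∫ ω, (∑ j, ((((Finset.univ.filter (fun a => W a ω = j)).card : ℝ) / k) - p j) * v j) ^ t ∂μ
      ≤ (8 * t / k : ℝ) ^ (t / 2) := by
  obtain ⟨m, rfl⟩ := ht.two_dvd
  have hm : 0 < m := by omega
  have : Nonempty (Fin k) := ⟨⟨0, hk⟩⟩
  have hk' : (0 : ℝ) < k := by exact_mod_cast hk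
  have hv_abs : ∀ j, |v j| ≤ 1 := fun j ↦ by rcases hv j with h | h <;> simp [h]
  set mean := ∑ j, p j * v j
  have h_sum : HasSubgaussianMGF (fun ω ↦ ∑ a, (v (W a ω) - mean)) k μ := by
    simpa using HasSubgaussianMGF.sum_of_iIndepFun
      (hindep.comp (fun _ j ↦ v j - mean) fun _ ↦ measurable_of_finite _) (s := univ)
      (c := fun _ ↦ 1) fun a _ ↦ hasSubgaussianMGF_comp_sub_sum_mul (hmeas a) hp0 (hlaw a) hv_abs
  have h_integrand (ω : Ω) : ∑ j, ((#{a | W a ω = j} : ℝ) / k - p j) * v j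
      = (∑ a, (v (W a ω) - mean)) / k := by
    simpa using sum_frequency_sub_mul_eq (W · ω) p v
  calc _ = (∫ ω, (∑ a, (v (W a ω) - mean)) ^ (2 * m) ∂μ) / k ^ (2 * m) := by
        simp_rw [h_integrand, div_pow, integral_div]
    _ ≤ 2 * (2 * exp 1 * k * m) ^ m / k ^ (2 * m) := by
        gcongr
        exact h_sum.integral_pow_two_mul_le (by positivity) hm
    _ = 2 * (2 * exp 1 * m / k) ^ m := by
        rw [pow_mul, mul_div_assoc, ← div_pow]
        field_simp
    _ ≤ 2 ^ m * (2 * exp 1 * m / k) ^ m := by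
        gcongr
        exact le_self_pow₀ one_le_two hm.ne'
    _ ≤ (8 * ↑(2 * m) / k) ^ (2 * m / 2) := by
        rw [← mul_pow, Nat.mul_div_cancel_left m two_pos, ← mul_div_assoc]
        gcongr (?_ / _) ^ _
        push_cast
        nlinarith [exp_one_lt_three, m.cast_nonneg (α := ℝ)]

/-- Moment bound for the normalized multinomial: if `X ~ Mul_k(p)` is the normalized frequency
vector of `k` i.i.d. draws `W₁, ..., W_k` from a distribution `p ∈ Δⁿ`, and `v ∈ {±1}ⁿ`, then
for any even `t ≤ k`, `E[⟨X - p, v⟩^t] ≤ (8t/k)^{t/2}`. -/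
theorem multinomial_moment_bound
    (Ω : Type*) [MeasurableSpace Ω] (μ : Measure Ω) [IsProbabilityMeasure μ]
    (n k t : ℕ) (hk : 0 < k) (ht : Even t) (ht0 : 0 < t) (htk : t ≤ k)
    (p : Fin n → ℝ) (hp0 : ∀ j, 0 ≤ p j) (hp1 : ∑ j, p j = 1)
    (v : Fin n → ℝ) (hv : ∀ j, v j = 1 ∨ v j = -1)
    (W : Fin k → Ω → Fin n)
    (hmeas : ∀ a, Measurable (W a))
    (hindep : iIndepFun W μ)
    (hlaw : ∀ a j, μ {ω | W a ω = j} = ENNReal.ofReal (p j)) :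
    ∫ ω, (∑ j, ((((Finset.univ.filter (fun a => W a ω = j)).card : ℝ) / k) - p j) * v j) ^ t ∂μ
      ≤ (8 * t / k : ℝ) ^ (t / 2) :=
  multinomial_moment_bound_general Ω μ n k t hk ht ht0 p hp0 v hv W hmeas hindep hlaw
end

section
/- Dual characterization of A_K distance: for distributions p, q over [n], max over unions S of at most K disjoint intervals of |p(S) - q(S)| equals (1/2)·max over v ∈ {±1}^n with at most 2K sign changes of ⟨p - q, v⟩. -/
open Finset
open scoped Classical

/-- `S` is a union of at most `K` pairwise disjoint intervals inside `{0, ..., n-1}`. -/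
def IsUnionOfIntervals (n K : ℕ) (S : Finset ℕ) : Prop :=
  ∃ I : Finset (ℕ × ℕ),
    I.card ≤ K ∧
    (∀ ab ∈ I, ab.1 ≤ ab.2 ∧ ab.2 < n) ∧
    (∀ ab ∈ I, ∀ cd ∈ I, ab ≠ cd → Disjoint (Finset.Icc ab.1 ab.2) (Finset.Icc cd.1 cd.2)) ∧
    S = I.biUnion fun ab => Finset.Icc ab.1 ab.2

noncomputable def runStarts (n : ℕ) (v : ℕ → ℝ) (ε : ℝ) : Finset ℕ :=
  (Finset.range n).filter (fun a => v a = ε ∧ (a = 0 ∨ v (a-1) ≠ ε))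

lemma mem_runStarts {n : ℕ} {v : ℕ → ℝ} {ε : ℝ} {a : ℕ} :
    a ∈ runStarts n v ε ↔ a < n ∧ v a = ε ∧ (a = 0 ∨ v (a-1) ≠ ε) := by
  simp [runStarts, and_assoc]

lemma unionOfRuns (n : ℕ) (v : ℕ → ℝ) (ε : ℝ) :
    IsUnionOfIntervals n (runStarts n v ε).card ((Finset.range n).filter (fun i => v i = ε)) := by
  classical
  set P : ℕ → ℕ → Prop := fun a m => m < n ∧ ∀ j ∈ Finset.Icc a m, v j = ε with hP
  set b : ℕ → ℕ := fun a => Nat.findGreatest (P a) (n-1) with hb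
  have hPaa : ∀ a ∈ runStarts n v ε, P a a := by
    intro a ha
    obtain ⟨h1, h2, _⟩ := mem_runStarts.1 ha
    exact ⟨h1, by simp [h2]⟩
  have hab : ∀ a ∈ runStarts n v ε, a ≤ b a := fun a ha =>
    Nat.le_findGreatest (by have := (mem_runStarts.1 ha).1; omega) (hPaa a ha)
  have hspec : ∀ a ∈ runStarts n v ε, P a (b a) := fun a ha =>
    Nat.findGreatest_spec (by have := (mem_runStarts.1 ha).1; omega) (hPaa a ha)
  have key : ∀ a ∈ runStarts n v ε, ∀ a' ∈ runStarts n v ε, a < a' → b a < a' := by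
    intro a ha a' ha' hlt
    by_contra hcon
    push_neg at hcon
    have h1 : v (a'-1) = ε := (hspec a ha).2 (a'-1) (by rw [Finset.mem_Icc]; omega)
    obtain ⟨_, _, h3⟩ := mem_runStarts.1 ha'
    rcases h3 with h | h
    · omega
    · exact h h1
  refine ⟨(runStarts n v ε).image (fun a => (a, b a)), Finset.card_image_le, ?_, ?_, ?_⟩
  · intro ab hab'
    obtain ⟨a, ha, rfl⟩ := Finset.mem_image.1 hab'
    exact ⟨hab a ha, (hspec a ha).1⟩
  · intro ab habm cd hcdm hne
    obtain ⟨a, ha, rfl⟩ := Finset.mem_image.1 habm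
    obtain ⟨c, hc, rfl⟩ := Finset.mem_image.1 hcdm
    have hac : a ≠ c := fun h => hne (by rw [h])
    rw [Finset.disjoint_left]
    intro x hx hx'
    rw [Finset.mem_Icc] at hx hx'
    rcases lt_or_gt_of_ne hac with h | h
    · have := key a ha c hc h; omega
    · have := key c hc a ha h; omega
  · have aux : ∀ i, i < n → v i = ε →
        ∃ a ∈ runStarts n v ε, a ≤ i ∧ ∀ j, a ≤ j → j ≤ i → v j = ε := by
      intro i
      induction i with
      | zero =>
        intro h0 hv
        refine ⟨0, mem_runStarts.2 ⟨h0, hv, Or.inl rfl⟩, le_refl _, fun j h1 h2 => ?_⟩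
        have hj0 : j = 0 := by omega
        rw [hj0]; exact hv
      | succ i ih =>
        intro hi hv
        by_cases hvi : v i = ε
        · obtain ⟨a, haS, hai, hall⟩ := ih (by omega) hvi
          refine ⟨a, haS, by omega, fun j h1 h2 => ?_⟩
          rcases Nat.lt_or_ge j (i+1) with h | h
          · exact hall j h1 (by omega)
          · have : j = i + 1 := by omega
            simpa [this] using hv
        · refine ⟨i+1, mem_runStarts.2 ⟨hi, hv, Or.inr (by simpa using hvi)⟩, le_refl _,
            fun j h1 h2 => ?_⟩
          have : j = i + 1 := by omega
          simpa [this] using hv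
    ext i
    simp only [Finset.mem_filter, Finset.mem_range, Finset.mem_biUnion, Finset.mem_image]
    constructor
    · rintro ⟨hi, hv⟩
      obtain ⟨a, haS, hai, hall⟩ := aux i hi hv
      refine ⟨(a, b a), ⟨a, haS, rfl⟩, ?_⟩
      rw [Finset.mem_Icc]
      refine ⟨hai, Nat.le_findGreatest (by omega) ⟨hi, fun j hj => ?_⟩⟩
      rw [Finset.mem_Icc] at hj
      exact hall j hj.1 hj.2
    · rintro ⟨ab, ⟨a, haS, rfl⟩, hx⟩
      rw [Finset.mem_Icc] at hx
      have hs := hspec a haS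
      exact ⟨by have := hs.1; omega, hs.2 i (Finset.mem_Icc.2 hx)⟩

lemma runStarts_card_le (n : ℕ) (v : ℕ → ℝ) (ε : ℝ) (I : Finset (ℕ × ℕ))
    (hS : ∀ i < n, (v i = ε ↔ i ∈ I.biUnion fun ab => Finset.Icc ab.1 ab.2)) :
    (runStarts n v ε).card ≤ I.card := by
  classical
  set f : ℕ → ℕ × ℕ := fun a =>
    if h : ∃ ab, ab ∈ I ∧ a ∈ Finset.Icc ab.1 ab.2 then h.choose else (0, 0) with hf
  have hex : ∀ a ∈ runStarts n v ε, ∃ ab, ab ∈ I ∧ a ∈ Finset.Icc ab.1 ab.2 := by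
    intro a ha
    obtain ⟨h1, h2, _⟩ := mem_runStarts.1 ha
    have := (hS a h1).1 h2
    simpa [Finset.mem_biUnion] using this
  have hmem : ∀ a ∈ runStarts n v ε, f a ∈ I ∧ a ∈ Finset.Icc (f a).1 (f a).2 := by
    intro a ha
    have h := hex a ha
    simp only [hf, dif_pos h]
    exact h.choose_spec
  have hfst : ∀ a ∈ runStarts n v ε, (f a).1 = a := by
    intro a ha
    obtain ⟨hI, hIcc⟩ := hmem a ha
    rw [Finset.mem_Icc] at hIcc
    by_contra hne
    have hlt : (f a).1 < a := lt_of_le_of_ne hIcc.1 hne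
    have ha0 : a ≠ 0 := by omega
    obtain ⟨h1, h2, h3⟩ := mem_runStarts.1 ha
    have hmem' : a - 1 ∈ I.biUnion fun ab => Finset.Icc ab.1 ab.2 :=
      Finset.mem_biUnion.2 ⟨f a, hI, Finset.mem_Icc.2 (by omega)⟩
    have : v (a-1) = ε := (hS (a-1) (by omega)).2 hmem'
    rcases h3 with h | h
    · exact ha0 h
    · exact h this
  apply Finset.card_le_card_of_injOn f (fun a ha => (hmem a ha).1)
  intro a ha b hb' hfab
  rw [← hfst a ha, ← hfst b hb', hfab]

lemma runStarts_other_card_le (n : ℕ) (v : ℕ → ℝ) (ε ε' : ℝ) (hne : ε' ≠ ε)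
    (hpm : ∀ i < n, v i = ε ∨ v i = ε')
    (I : Finset (ℕ × ℕ))
    (hS : ∀ i < n, (v i = ε ↔ i ∈ I.biUnion fun ab => Finset.Icc ab.1 ab.2)) :
    (runStarts n v ε').card ≤ I.card + 1 := by
  classical
  set f : ℕ → ℕ × ℕ := fun a =>
    if h : ∃ ab, ab ∈ I ∧ a - 1 ∈ Finset.Icc ab.1 ab.2 then h.choose else (0, 0) with hf
  have hex : ∀ a ∈ (runStarts n v ε').erase 0, ∃ ab, ab ∈ I ∧ a - 1 ∈ Finset.Icc ab.1 ab.2 := by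
    intro a ha
    have ha0 : a ≠ 0 := Finset.ne_of_mem_erase ha
    obtain ⟨h1, h2, h3⟩ := mem_runStarts.1 (Finset.mem_of_mem_erase ha)
    have hva : v (a-1) ≠ ε' := h3.resolve_left ha0
    have hva2 : v (a-1) = ε := by
      rcases hpm (a-1) (by omega) with h | h
      · exact h
      · exact absurd h hva
    have := (hS (a-1) (by omega)).1 hva2
    simpa [Finset.mem_biUnion] using this
  have hmem : ∀ a ∈ (runStarts n v ε').erase 0,
      f a ∈ I ∧ a - 1 ∈ Finset.Icc (f a).1 (f a).2 := by
    intro a ha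
    have h := hex a ha
    simp only [hf, dif_pos h]
    exact h.choose_spec
  have hsnd : ∀ a ∈ (runStarts n v ε').erase 0, (f a).2 = a - 1 := by
    intro a ha
    have ha0 : a ≠ 0 := Finset.ne_of_mem_erase ha
    obtain ⟨h1, h2, h3⟩ := mem_runStarts.1 (Finset.mem_of_mem_erase ha)
    obtain ⟨hI, hIcc⟩ := hmem a ha
    rw [Finset.mem_Icc] at hIcc
    by_contra hc
    have hlt : a ≤ (f a).2 := by omega
    have hmem' : a ∈ I.biUnion fun ab => Finset.Icc ab.1 ab.2 :=
      Finset.mem_biUnion.2 ⟨f a, hI, Finset.mem_Icc.2 (by omega)⟩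
    have : v a = ε := (hS a h1).2 hmem'
    rw [h2] at this
    exact hne this
  have hcard1 : ((runStarts n v ε').erase 0).card ≤ I.card := by
    apply Finset.card_le_card_of_injOn f (fun a ha => (hmem a ha).1)
    intro a ha b hb' hfab
    have h1 := hsnd a ha
    have h2 := hsnd b hb'
    have ha0 : a ≠ 0 := Finset.ne_of_mem_erase ha
    have hb0 : b ≠ 0 := Finset.ne_of_mem_erase hb'
    rw [hfab] at h1
    omega
  have hsub : runStarts n v ε' ⊆ insert 0 ((runStarts n v ε').erase 0) := by
    intro x hx
    by_cases hx0 : x = 0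
    · exact hx0 ▸ Finset.mem_insert_self _ _
    · exact Finset.mem_insert_of_mem (Finset.mem_erase.2 ⟨hx0, hx⟩)
  calc (runStarts n v ε').card ≤ (insert 0 ((runStarts n v ε').erase 0)).card :=
        Finset.card_le_card hsub
    _ ≤ ((runStarts n v ε').erase 0).card + 1 := Finset.card_insert_le _ _
    _ ≤ I.card + 1 := by omega

lemma runStarts_disjoint {n : ℕ} {v : ℕ → ℝ} {ε ε' : ℝ} (h : ε ≠ ε') :
    Disjoint (runStarts n v ε) (runStarts n v ε') := by
  rw [Finset.disjoint_left]
  intro a ha ha'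
  have h1 := (mem_runStarts.1 ha).2.1
  have h2 := (mem_runStarts.1 ha').2.1
  exact h (h1 ▸ h2 ▸ rfl)

lemma signChanges_add_one_le (n : ℕ) (hn : 0 < n) (v : ℕ → ℝ)
    (h : ∀ i < n, v i = 1 ∨ v i = -1) :
    signChanges n v + 1 ≤ (runStarts n v 1).card + (runStarts n v (-1)).card := by
  classical
  set C := (Finset.range (n - 1)).filter (fun i => v (i + 1) ≠ v i) with hC
  set s := runStarts n v 1 ∪ runStarts n v (-1) with hs
  have hsub : insert 0 (C.image (· + 1)) ⊆ s := by
    intro x hx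
    rcases Finset.mem_insert.1 hx with rfl | hx
    · rcases h 0 hn with h0 | h0
      · exact Finset.mem_union_left _ (mem_runStarts.2 ⟨hn, h0, Or.inl rfl⟩)
      · exact Finset.mem_union_right _ (mem_runStarts.2 ⟨hn, h0, Or.inl rfl⟩)
    · obtain ⟨i, hi, rfl⟩ := Finset.mem_image.1 hx
      rw [hC, Finset.mem_filter, Finset.mem_range] at hi
      obtain ⟨hi1, hi2⟩ := hi
      have hin : i + 1 < n := by omega
      have hne : v (i + 1 - 1) ≠ v (i + 1) := by simpa using fun hh => hi2 hh.symm
      rcases h (i + 1) hin with h0 | h0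
      · exact Finset.mem_union_left _ (mem_runStarts.2 ⟨hin, h0, Or.inr (h0 ▸ hne)⟩)
      · exact Finset.mem_union_right _ (mem_runStarts.2 ⟨hin, h0, Or.inr (h0 ▸ hne)⟩)
  have h0img : 0 ∉ C.image (· + 1) := by
    simp
  have hcard : C.card + 1 ≤ s.card := by
    have h1 : (C.image (· + 1)).card = C.card :=
      Finset.card_image_of_injective _ (fun a b => by omega)
    have h2 : (insert 0 (C.image (· + 1))).card = C.card + 1 := by
      rw [Finset.card_insert_of_notMem h0img, h1]
    rw [← h2]
    exact Finset.card_le_card hsub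
  have : s.card = (runStarts n v 1).card + (runStarts n v (-1)).card :=
    Finset.card_union_of_disjoint (runStarts_disjoint (by norm_num))
  have hCc : C.card = signChanges n v := rfl
  omega

lemma runStarts_card_add_le (n : ℕ) (v : ℕ → ℝ) (ε ε' : ℝ) (hne : ε ≠ ε') :
    (runStarts n v ε).card + (runStarts n v ε').card ≤ signChanges n v + 1 := by
  classical
  set C := (Finset.range (n - 1)).filter (fun i => v (i + 1) ≠ v i) with hC
  set s := runStarts n v ε ∪ runStarts n v ε' with hs
  have hmap : ∀ a ∈ s.erase 0, a - 1 ∈ C := by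
    intro a ha
    have ha0 : a ≠ 0 := Finset.ne_of_mem_erase ha
    have ha' := Finset.mem_of_mem_erase ha
    have key : a < n ∧ v (a - 1) ≠ v a := by
      rcases Finset.mem_union.1 ha' with hm | hm <;>
      · obtain ⟨h1, h2, h3⟩ := mem_runStarts.1 hm
        exact ⟨h1, by rw [h2]; exact h3.resolve_left ha0⟩
    rw [hC, Finset.mem_filter, Finset.mem_range]
    constructor
    · omega
    · have : a - 1 + 1 = a := by omega
      rw [this]
      exact fun hh => key.2 hh.symm
  have hinj : ((s.erase 0)).card ≤ C.card := by
    apply Finset.card_le_card_of_injOn (· - 1) hmap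
    intro a ha b hb hab
    have ha0 : a ≠ 0 := Finset.ne_of_mem_erase ha
    have hb0 : b ≠ 0 := Finset.ne_of_mem_erase hb
    simp only at hab
    omega
  have hsub : s ⊆ insert 0 (s.erase 0) := by
    intro x hx
    by_cases hx0 : x = 0
    · exact hx0 ▸ Finset.mem_insert_self _ _
    · exact Finset.mem_insert_of_mem (Finset.mem_erase.2 ⟨hx0, hx⟩)
  have hcards : s.card = (runStarts n v ε).card + (runStarts n v ε').card :=
    Finset.card_union_of_disjoint (runStarts_disjoint hne)
  have : s.card ≤ (s.erase 0).card + 1 :=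
    le_trans (Finset.card_le_card hsub) (Finset.card_insert_le _ _)
  have hCc : C.card = signChanges n v := rfl
  omega

lemma sum_mul_pm (n : ℕ) (d v : ℕ → ℝ) (ε : ℝ)
    (hd : ∑ i ∈ Finset.range n, d i = 0)
    (h : ∀ i < n, v i = ε ∨ v i = -ε) :
    ∑ i ∈ Finset.range n, d i * v i
      = 2 * ε * ∑ i ∈ (Finset.range n).filter (fun i => v i = ε), d i := by
  classical
  rw [← Finset.sum_filter_add_sum_filter_not (Finset.range n) (fun i => v i = ε)
    (fun i => d i * v i)]
  have h1 : ∑ i ∈ (Finset.range n).filter (fun i => v i = ε), d i * v i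
      = ε * ∑ i ∈ (Finset.range n).filter (fun i => v i = ε), d i := by
    rw [Finset.mul_sum]
    apply Finset.sum_congr rfl
    intro i hi
    rw [Finset.mem_filter] at hi
    rw [hi.2]; ring
  have h2 : ∑ i ∈ (Finset.range n).filter (fun i => ¬ v i = ε), d i * v i
      = -ε * ∑ i ∈ (Finset.range n).filter (fun i => ¬ v i = ε), d i := by
    rw [Finset.mul_sum]
    apply Finset.sum_congr rfl
    intro i hi
    rw [Finset.mem_filter, Finset.mem_range] at hi
    rcases h i hi.1 with hh | hh
    · exact absurd hh hi.2
    · rw [hh]; ring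
  have h3 : ∑ i ∈ (Finset.range n).filter (fun i => ¬ v i = ε), d i
      = - ∑ i ∈ (Finset.range n).filter (fun i => v i = ε), d i := by
    have := Finset.sum_filter_add_sum_filter_not (Finset.range n) (fun i => v i = ε) d
    rw [hd] at this
    linarith
  rw [h1, h2, h3]
  ring

/-- Dual characterization of the `A_K` distance: for probability distributions `p, q` on `[n]`,
the maximum of `|p(S) - q(S)|` over unions `S` of at most `K` disjoint intervals equals half the
maximum of `⟨p - q, v⟩` over sign vectors `v ∈ {±1}ⁿ` with at most `2K` sign changes. -/
theorem ak_distance_dual (n K : ℕ) (hn : 0 < n) (p q : ℕ → ℝ)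
    (hp0 : ∀ i < n, 0 ≤ p i) (hp1 : ∑ i ∈ Finset.range n, p i = 1)
    (hq0 : ∀ i < n, 0 ≤ q i) (hq1 : ∑ i ∈ Finset.range n, q i = 1) :
    sSup {x : ℝ | ∃ S : Finset ℕ, IsUnionOfIntervals n K S ∧
        x = |∑ i ∈ S, p i - ∑ i ∈ S, q i|}
      = (1 / 2) * sSup {x : ℝ | ∃ v : ℕ → ℝ,
          (∀ i < n, v i = 1 ∨ v i = -1) ∧ signChanges n v ≤ 2 * K ∧
          x = ∑ i ∈ Finset.range n, (p i - q i) * v i} := by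
  classical
  set A := {x : ℝ | ∃ S : Finset ℕ, IsUnionOfIntervals n K S ∧
      x = |∑ i ∈ S, p i - ∑ i ∈ S, q i|} with hA
  set B := {x : ℝ | ∃ v : ℕ → ℝ,
      (∀ i < n, v i = 1 ∨ v i = -1) ∧ signChanges n v ≤ 2 * K ∧
      x = ∑ i ∈ Finset.range n, (p i - q i) * v i} with hB
  have hd : ∑ i ∈ Finset.range n, (p i - q i) = 0 := by
    rw [Finset.sum_sub_distrib, hp1, hq1]; ring
  have hsubA : ∀ S : Finset ℕ, IsUnionOfIntervals n K S → S ⊆ Finset.range n := by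
    rintro S ⟨I, _, hval, _, rfl⟩ i hi
    obtain ⟨ab, habI, hIcc⟩ := Finset.mem_biUnion.1 hi
    rw [Finset.mem_Icc] at hIcc
    have := (hval ab habI).2
    rw [Finset.mem_range]
    omega
  have hAne : A.Nonempty := by
    refine ⟨0, ∅, ⟨∅, by simp, by simp, by simp, by simp⟩, by simp⟩
  have hBne : B.Nonempty := by
    refine ⟨0, fun _ => 1, fun i _ => Or.inl rfl, by simp [signChanges], ?_⟩
    simp only [mul_one]
    exact hd.symm
  have hAbdd : BddAbove A := by
    refine ⟨1, ?_⟩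
    rintro x ⟨S, hU, rfl⟩
    have hsub := hsubA S hU
    have hp' : ∑ i ∈ S, p i ≤ 1 := by
      rw [← hp1]
      exact Finset.sum_le_sum_of_subset_of_nonneg hsub
        (fun i hi _ => hp0 i (Finset.mem_range.1 hi))
    have hq' : ∑ i ∈ S, q i ≤ 1 := by
      rw [← hq1]
      exact Finset.sum_le_sum_of_subset_of_nonneg hsub
        (fun i hi _ => hq0 i (Finset.mem_range.1 hi))
    have hpn : 0 ≤ ∑ i ∈ S, p i :=
      Finset.sum_nonneg (fun i hi => hp0 i (Finset.mem_range.1 (hsub hi)))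
    have hqn : 0 ≤ ∑ i ∈ S, q i :=
      Finset.sum_nonneg (fun i hi => hq0 i (Finset.mem_range.1 (hsub hi)))
    rw [abs_le]
    constructor <;> linarith
  have hBbdd : BddAbove B := by
    refine ⟨2, ?_⟩
    rintro x ⟨v, hvpm, _, rfl⟩
    calc ∑ i ∈ Finset.range n, (p i - q i) * v i
        ≤ ∑ i ∈ Finset.range n, |(p i - q i) * v i| :=
          Finset.sum_le_sum (fun i _ => le_abs_self _)
      _ ≤ ∑ i ∈ Finset.range n, (p i + q i) := by
          apply Finset.sum_le_sum
          intro i hi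
          have hi' := Finset.mem_range.1 hi
          have hv : |v i| = 1 := by
            rcases hvpm i hi' with h | h <;> rw [h] <;> norm_num
          rw [abs_mul, hv, mul_one, abs_le]
          have := hp0 i hi'
          have := hq0 i hi'
          constructor <;> linarith
      _ = 2 := by rw [Finset.sum_add_distrib, hp1, hq1]; norm_num
  -- Direction 2 : for every element of A, twice it is at most sSup B.
  have key2 : ∀ x ∈ A, 2 * x ≤ sSup B := by
    rintro x ⟨S, hU, rfl⟩
    have hsub := hsubA S hU
    obtain ⟨I, hcard, hval, hdisj, hSeq⟩ := hU
    set v : ℕ → ℝ := fun i => if i ∈ S then 1 else -1 with hv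
    have hvpm : ∀ i < n, v i = 1 ∨ v i = -1 := by
      intro i _
      by_cases h : i ∈ S <;> simp [hv, h]
    have hS1 : ∀ i < n, (v i = 1 ↔ i ∈ I.biUnion fun ab => Finset.Icc ab.1 ab.2) := by
      intro i hi
      rw [← hSeq]
      by_cases h : i ∈ S
      · simp [hv, h]
      · simp [hv, h]
        norm_num
    have hr1 : (runStarts n v 1).card ≤ I.card := runStarts_card_le n v 1 I hS1
    have hr2 : (runStarts n v (-1)).card ≤ I.card + 1 :=
      runStarts_other_card_le n v 1 (-1) (by norm_num) hvpm I hS1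
    have hch : signChanges n v ≤ 2 * K := by
      have := signChanges_add_one_le n hn v hvpm
      omega
    have hfil : (Finset.range n).filter (fun i => v i = 1) = S := by
      ext i
      simp only [Finset.mem_filter, Finset.mem_range]
      constructor
      · rintro ⟨hi, hvi⟩
        rw [hSeq]
        exact (hS1 i hi).1 hvi
      · intro h
        have hi := Finset.mem_range.1 (hsub h)
        exact ⟨hi, (hS1 i hi).2 (hSeq ▸ h)⟩
    have hsum : ∑ i ∈ Finset.range n, (p i - q i) * v i
        = 2 * (∑ i ∈ S, p i - ∑ i ∈ S, q i) := by
      rw [sum_mul_pm n (fun i => p i - q i) v 1 hd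
        (by intro i hi; simpa using hvpm i hi), hfil, Finset.sum_sub_distrib]
      ring
    set y := ∑ i ∈ S, p i - ∑ i ∈ S, q i with hy
    have hb1 : (2 * y) ∈ B := ⟨v, hvpm, hch, hsum.symm⟩
    have hb2 : (-(2 * y)) ∈ B := by
      refine ⟨fun i => -(v i), ?_, ?_, ?_⟩
      · intro i hi
        rcases hvpm i hi with h | h
        · right; show -(v i) = -1; rw [h]
        · left; show -(v i) = 1; rw [h]; norm_num
      · have heq : signChanges n (fun i => -(v i)) = signChanges n v := by
          unfold signChanges
          congr 1
          apply Finset.filter_congr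
          intro i _
          simp
        rw [heq]; exact hch
      · rw [← hsum]
        rw [← Finset.sum_neg_distrib]
        apply Finset.sum_congr rfl
        intro i _
        ring
    rcases abs_cases y with ⟨h1, _⟩ | ⟨h1, _⟩
    · rw [h1]
      exact le_csSup hBbdd hb1
    · rw [h1]
      have := le_csSup hBbdd hb2
      linarith
  -- Direction 1 : every element of B is at most twice sSup A.
  have key1 : ∀ x ∈ B, x ≤ 2 * sSup A := by
    rintro x ⟨v, hvpm, hchg, rfl⟩
    have hr := runStarts_card_add_le n v 1 (-1) (by norm_num)
    have hcases : (runStarts n v 1).card ≤ K ∨ (runStarts n v (-1)).card ≤ K := by omega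
    have main : ∀ ε : ℝ, (ε = 1 ∨ ε = -1) → (runStarts n v ε).card ≤ K →
        ∑ i ∈ Finset.range n, (p i - q i) * v i ≤ 2 * sSup A := by
      intro ε hε hrK
      set S := (Finset.range n).filter (fun i => v i = ε) with hS
      have hU : IsUnionOfIntervals n K S := by
        obtain ⟨I, hc', h2, h3, h4⟩ := unionOfRuns n v ε
        exact ⟨I, hc'.trans hrK, h2, h3, h4⟩
      have hmemA : |∑ i ∈ S, p i - ∑ i ∈ S, q i| ∈ A := ⟨S, hU, rfl⟩
      have hpm' : ∀ i < n, v i = ε ∨ v i = -ε := by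
        intro i hi
        rcases hε with rfl | rfl
        · simpa using hvpm i hi
        · rcases hvpm i hi with h | h
          · right; rw [h]; norm_num
          · left; exact h
      have hsum : ∑ i ∈ Finset.range n, (p i - q i) * v i
          = 2 * ε * (∑ i ∈ S, p i - ∑ i ∈ S, q i) := by
        rw [sum_mul_pm n (fun i => p i - q i) v ε hd hpm', ← hS, Finset.sum_sub_distrib]
      have habs : 2 * ε * (∑ i ∈ S, p i - ∑ i ∈ S, q i)
          ≤ 2 * |∑ i ∈ S, p i - ∑ i ∈ S, q i| := by
        have h1 : ε * (∑ i ∈ S, p i - ∑ i ∈ S, q i) ≤ |∑ i ∈ S, p i - ∑ i ∈ S, q i| := by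
          calc ε * (∑ i ∈ S, p i - ∑ i ∈ S, q i)
              ≤ |ε * (∑ i ∈ S, p i - ∑ i ∈ S, q i)| := le_abs_self _
            _ = |∑ i ∈ S, p i - ∑ i ∈ S, q i| := by
                rw [abs_mul]
                rcases hε with rfl | rfl <;> norm_num
        linarith
      have hle : |∑ i ∈ S, p i - ∑ i ∈ S, q i| ≤ sSup A := le_csSup hAbdd hmemA
      rw [hsum]
      linarith
    rcases hcases with h | h
    · exact main 1 (Or.inl rfl) h
    · exact main (-1) (Or.inr rfl) h
  have h1 : sSup A ≤ (1 / 2) * sSup B := by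
    apply csSup_le hAne
    intro a ha
    have := key2 a ha
    linarith
  have h2 : sSup B ≤ 2 * sSup A := csSup_le hBne key1
  have h3 : (1 / 2) * sSup B ≤ sSup A := by linarith
  linarith
end
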